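/- Let u, v : ℝ × ℝ → ℝ be smooth (C^∞) functions of (t, x) and let a, b, c, ε, κ, λ, σ be real constants with b = 0, λ = 0, ε = 0, σ = 0 and a ≠ 0. If (u, v) solves the BBM-KdV system, then for every real number s the scaled pair ũ(t,x) = (exp(−2·a·s)·(a·u(exp(−2·a·s)·t, exp(−a·s)·x) + c) − c)/a, ṽ(t,x) = exp(−a·s)·v(exp(−2·a·s)·t, exp(−a·s)·x) also solves the BBM-KdV system. (This is the invariance under the one-parameter group generated by the symmetry 2X₁ + X₃, where X₁ = (a + b)·(t·∂_t − v·∂_v) − 2·(a·u + c)·∂_u and X₃ = (a + b)·(x·∂_x + v·∂_v) + 2·(a·u + c)·∂_u.) -/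

import Mathlib

open Real

noncomputable def pt (f : ℝ × ℝ → ℝ) : ℝ × ℝ → ℝ :=
  fun p => deriv (fun s => f (s, p.2)) p.1

noncomputable def px (f : ℝ × ℝ → ℝ) : ℝ × ℝ → ℝ :=
  fun p => deriv (fun s => f (p.1, s)) p.2

/-- The BBM-KdV system: F1 = 0 and F2 = 0 everywhere. -/
def BBMKdV (a b c ε κ lam σ : ℝ) (u v : ℝ × ℝ → ℝ) : Prop :=
  (∀ p : ℝ × ℝ, pt u p + (a + b) * v p * px u p + (a * u p + c) * px v p
      + ε * px (px (pt u)) p + κ * px (px (px v)) p = 0) ∧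
  (∀ p : ℝ × ℝ, pt v p + (b * u p + c) * px u p + (a + b) * v p * px v p
      + lam * px (px (px u)) p + σ * px (px (pt v)) p = 0)


lemma smooth_lin (α β : ℝ) : ContDiff ℝ (⊤ : ℕ∞) (fun p : ℝ × ℝ => ((α*p.1, β*p.2) : ℝ × ℝ)) :=
  (contDiff_const.mul contDiff_fst).prodMk (contDiff_const.mul contDiff_snd)

lemma pt_comp (f : ℝ × ℝ → ℝ) (hf : ContDiff ℝ (⊤ : ℕ∞) f) (α β : ℝ) :
    pt (fun q => f (α*q.1, β*q.2)) = fun p => α * pt f (α*p.1, β*p.2) := by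
  funext p
  have hc1 : HasDerivAt (fun s : ℝ => ((α*s, β*p.2) : ℝ × ℝ)) ((α, 0) : ℝ × ℝ) p.1 := by
    have h : HasDerivAt (fun s : ℝ => α*s) α p.1 := by
      simpa using (hasDerivAt_id p.1).const_mul α
    exact h.prodMk (hasDerivAt_const _ _)
  have hc2 : HasDerivAt (fun s : ℝ => ((s, β*p.2) : ℝ × ℝ)) ((1, 0) : ℝ × ℝ) (α*p.1) :=
    (hasDerivAt_id _).prodMk (hasDerivAt_const _ _)
  have hfd := (hf.differentiable (by simp) (α*p.1, β*p.2)).hasFDerivAt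
  have h1 := hfd.comp_hasDerivAt p.1 hc1
  have h2 := hfd.comp_hasDerivAt (α*p.1) hc2
  rw [Function.comp_def] at h1 h2
  have e : ((α, 0) : ℝ × ℝ) = α • ((1, 0) : ℝ × ℝ) := by simp
  simp only [pt]
  rw [h1.deriv, h2.deriv, e, map_smul, smul_eq_mul]

lemma px_comp (f : ℝ × ℝ → ℝ) (hf : ContDiff ℝ (⊤ : ℕ∞) f) (α β : ℝ) :
    px (fun q => f (α*q.1, β*q.2)) = fun p => β * px f (α*p.1, β*p.2) := by
  funext p
  have hc1 : HasDerivAt (fun s : ℝ => ((α*p.1, β*s) : ℝ × ℝ)) ((0, β) : ℝ × ℝ) p.2 := by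
    have h : HasDerivAt (fun s : ℝ => β*s) β p.2 := by
      simpa using (hasDerivAt_id p.2).const_mul β
    exact (hasDerivAt_const _ _).prodMk h
  have hc2 : HasDerivAt (fun s : ℝ => ((α*p.1, s) : ℝ × ℝ)) ((0, 1) : ℝ × ℝ) (β*p.2) :=
    (hasDerivAt_const _ _).prodMk (hasDerivAt_id _)
  have hfd := (hf.differentiable (by simp) (α*p.1, β*p.2)).hasFDerivAt
  have h1 := hfd.comp_hasDerivAt p.2 hc1
  have h2 := hfd.comp_hasDerivAt (β*p.2) hc2
  rw [Function.comp_def] at h1 h2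
  have e : ((0, β) : ℝ × ℝ) = β • ((0, 1) : ℝ × ℝ) := by simp
  simp only [px]
  rw [h1.deriv, h2.deriv, e, map_smul, smul_eq_mul]

lemma pt_affine (f : ℝ × ℝ → ℝ) (hf : ContDiff ℝ (⊤ : ℕ∞) f) (C D : ℝ) :
    pt (fun q => C * f q + D) = fun p => C * pt f p := by
  funext p
  have hd : DifferentiableAt ℝ (fun s : ℝ => f (s, p.2)) p.1 :=
    (hf.differentiable (by simp) (p.1, p.2)).comp p.1
      (differentiableAt_id.prodMk (differentiableAt_const _))
  simp only [pt]
  rw [deriv_add_const, deriv_const_mul _ hd]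

lemma px_affine (f : ℝ × ℝ → ℝ) (hf : ContDiff ℝ (⊤ : ℕ∞) f) (C D : ℝ) :
    px (fun q => C * f q + D) = fun p => C * px f p := by
  funext p
  have hd : DifferentiableAt ℝ (fun s : ℝ => f (p.1, s)) p.2 :=
    (hf.differentiable (by simp) (p.1, p.2)).comp p.2
      ((differentiableAt_const _).prodMk differentiableAt_id)
  simp only [px]
  rw [deriv_add_const, deriv_const_mul _ hd]

lemma px_eq (f : ℝ × ℝ → ℝ) (hf : ContDiff ℝ (⊤ : ℕ∞) f) :
    px f = fun p => fderiv ℝ f p (0, 1) := by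
  funext p
  have hc : HasDerivAt (fun s : ℝ => ((p.1, s) : ℝ × ℝ)) ((0, 1) : ℝ × ℝ) p.2 :=
    (hasDerivAt_const _ _).prodMk (hasDerivAt_id _)
  have h := ((hf.differentiable (by simp) p).hasFDerivAt).comp_hasDerivAt p.2 hc
  rw [Function.comp_def] at h
  simp only [px]
  rw [h.deriv]

lemma contDiff_px (f : ℝ × ℝ → ℝ) (hf : ContDiff ℝ (⊤ : ℕ∞) f) : ContDiff ℝ (⊤ : ℕ∞) (px f) := by
  rw [px_eq f hf]
  exact (hf.fderiv_right (by simp)).clm_apply contDiff_const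

lemma pt_smul_comp (f : ℝ × ℝ → ℝ) (hf : ContDiff ℝ (⊤ : ℕ∞) f) (C D α β : ℝ) :
    pt (fun q => C * f (α*q.1, β*q.2) + D) = fun p => C * α * pt f (α*p.1, β*p.2) := by
  have hg : ContDiff ℝ (⊤ : ℕ∞) (fun q : ℝ×ℝ => f (α*q.1, β*q.2)) := hf.comp (smooth_lin α β)
  simp only [pt_affine _ hg C D, pt_comp f hf α β]
  funext p; ring

lemma px_smul_comp (f : ℝ × ℝ → ℝ) (hf : ContDiff ℝ (⊤ : ℕ∞) f) (C D α β : ℝ) :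
    px (fun q => C * f (α*q.1, β*q.2) + D) = fun p => C * β * px f (α*p.1, β*p.2) := by
  have hg : ContDiff ℝ (⊤ : ℕ∞) (fun q : ℝ×ℝ => f (α*q.1, β*q.2)) := hf.comp (smooth_lin α β)
  simp only [px_affine _ hg C D, px_comp f hf α β]
  funext p; ring

lemma pt_smul_comp' (f : ℝ × ℝ → ℝ) (hf : ContDiff ℝ (⊤ : ℕ∞) f) (C α β : ℝ) :
    pt (fun q => C * f (α*q.1, β*q.2)) = fun p => C * α * pt f (α*p.1, β*p.2) := by
  have := pt_smul_comp f hf C 0 α β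
  simpa using this

lemma px_smul_comp' (f : ℝ × ℝ → ℝ) (hf : ContDiff ℝ (⊤ : ℕ∞) f) (C α β : ℝ) :
    px (fun q => C * f (α*q.1, β*q.2)) = fun p => C * β * px f (α*p.1, β*p.2) := by
  have := px_smul_comp f hf C 0 α β
  simpa using this

lemma px3_smul_comp (f : ℝ × ℝ → ℝ) (hf : ContDiff ℝ (⊤ : ℕ∞) f) (C α β : ℝ) :
    px (px (px (fun q => C * f (α*q.1, β*q.2)))) =
      fun p => C * β * β * β * px (px (px f)) (α*p.1, β*p.2) := by
  rw [px_smul_comp' f hf C α β,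
      px_smul_comp' (px f) (contDiff_px f hf) (C*β) α β,
      px_smul_comp' (px (px f)) (contDiff_px _ (contDiff_px f hf)) (C*β*β) α β]

theorem stmt_15 (u v : ℝ × ℝ → ℝ) (hu : ContDiff ℝ (⊤ : ℕ∞) u) (hv : ContDiff ℝ (⊤ : ℕ∞) v)
    (a b c ε κ lam σ : ℝ)
    (hb : b = 0) (hl : lam = 0) (he : ε = 0) (hs : σ = 0) (ha : a ≠ 0)
    (hsol : BBMKdV a b c ε κ lam σ u v) :
    ∀ s : ℝ, BBMKdV a b c ε κ lam σ
      (fun p => (Real.exp (-2 * a * s) * (a * u (Real.exp (-2 * a * s) * p.1, Real.exp (-a * s) * p.2) + c) - c) / a)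
      (fun p => Real.exp (-a * s) * v (Real.exp (-2 * a * s) * p.1, Real.exp (-a * s) * p.2)) := by
  subst hb hl he hs
  intro s
  obtain ⟨h1, h2⟩ := hsol
  set α := Real.exp (-2 * a * s) with hαdef
  set β := Real.exp (-a * s) with hβdef
  have hβα : β * β = α := by
    rw [hβdef, hαdef, ← Real.exp_add]; congr 1; ring
  have huc : (fun p : ℝ × ℝ => (α * (a * u (α * p.1, β * p.2) + c) - c) / a)
      = fun p => α * u (α * p.1, β * p.2) + (α * c - c) / a := by
    funext p; field_simp; ring
  constructor
  · intro p
    simp only [huc, pt_smul_comp u hu α ((α*c-c)/a) α β,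
      px_smul_comp u hu α ((α*c-c)/a) α β,
      pt_smul_comp' v hv β α β, px_smul_comp' v hv β α β,
      px_smul_comp' (px v) (contDiff_px v hv) (β*β) α β,
      px_smul_comp' (px (px v)) (contDiff_px _ (contDiff_px v hv)) (β*β*β) α β]
    have hdiv : a * ((α * (a * u (α * p.1, β * p.2) + c) - c) / a) + c
        = α * (a * u (α * p.1, β * p.2) + c) := by field_simp; ring
    rw [hdiv]
    linear_combination (α * α) * h1 (α * p.1, β * p.2) +
      (a * v (α * p.1, β * p.2) * px u (α * p.1, β * p.2) * α +
       (a * u (α * p.1, β * p.2) + c) * px v (α * p.1, β * p.2) * α +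
       κ * px (px (px v)) (α * p.1, β * p.2) * (β * β + α)) * hβα
  · intro p
    simp only [huc, pt_smul_comp u hu α ((α*c-c)/a) α β,
      px_smul_comp u hu α ((α*c-c)/a) α β,
      pt_smul_comp' v hv β α β, px_smul_comp' v hv β α β]
    linear_combination (α * β) * h2 (α * p.1, β * p.2) +
      a * β * v (α * p.1, β * p.2) * px v (α * p.1, β * p.2) * hβα
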